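/- arXiv:1902.04744 — 2 statements merged into one kernel-verified Lean document; each statement's English description precedes it below -/
import Mathlib

section
/- Let $(X_n)_{n \ge 0}$ be a stochastic process adapted to a filtration $(\mathcal{F}_n)$ with $X_n \ge 0$, and let $T := \inf\{n : X_n \text{ leaves the nonnegative region}\}$ be a stopping time. Suppose there exist $\epsilon > 0$ and $K \le 0$ such that on $\{T > n\}$, $\mathbb{E}[X_{n+1} \mid \mathcal{F}_n] \le X_n - \epsilon$, and $K \le X_T \le 0$ on $\{T < \infty\}$. Then $\mathbb{E}[T] \le \frac{X_0 - K}{\epsilon}$. -/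
/-!
Stop the process at `T`. On `{T > n}` the stopped process follows `X`, so by the drift condition
its mean drops by at least `ε · P(T > n)` from step `n` to step `n + 1`, while it never falls
below `K`. Telescoping gives `ε · ∑_{n<N} P(T > n) ≤ x0 - K` for every `N`, and
`E[T] = ∑_n P(T > n)`.
-/

open MeasureTheory
open scoped ENNReal

theorem ENat.toENNReal_eq_tsum_ite (x : ℕ∞) :
    (x : ℝ≥0∞) = ∑' n : ℕ, if (n : ℕ∞) < x then 1 else 0 := by
  induction x using ENat.recTopCoe with
  | top => simp
  | coe a =>
    rw [tsum_eq_sum (s := Finset.range a) (fun n hn => by simpa using hn)]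
    simp [Finset.filter_true_of_mem]

theorem sum_range_le_div_of_le_sub_mul {a b : ℕ → ℝ} {ε K : ℝ} (hε : 0 < ε)
    (hstep : ∀ n, a (n + 1) ≤ a n - ε * b n) (hK : ∀ n, K ≤ a n) (N : ℕ) :
    ∑ k ∈ Finset.range N, b k ≤ (a 0 - K) / ε := by
  have htele : a N + ε * ∑ k ∈ Finset.range N, b k ≤ a 0 := by
    induction N with
    | zero => simp
    | succ N ih =>
      rw [Finset.sum_range_succ, mul_add]
      linarith [hstep N]
  rw [le_div_iff₀ hε]
  linarith [hK N]

namespace MeasureTheory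

theorem stoppedProcess_add_one_sub {Ω β : Type*} [AddGroup β] (u : ℕ → Ω → β) (τ : Ω → ℕ∞)
    (n : ℕ) :
    stoppedProcess u τ (n + 1) - stoppedProcess u τ n =
      {ω | (n : ℕ∞) < τ ω}.indicator (u (n + 1) - u n) := by
  ext ω
  by_cases h : (n : ℕ∞) < τ ω
  · rw [Pi.sub_apply, stoppedProcess_eq_of_le (Order.add_one_le_of_lt h),
      stoppedProcess_eq_of_le h.le]
    simp [h]
  · rw [not_lt] at h
    rw [Pi.sub_apply, stoppedProcess_eq_of_ge h,
      stoppedProcess_eq_of_ge (h.trans (WithTop.coe_le_coe.2 n.le_succ))]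
    simp [h]

theorem lintegral_toENNReal_eq_tsum_measure_lt {Ω : Type*} [MeasurableSpace Ω] (μ : Measure Ω)
    {T : Ω → ℕ∞} (hT : ∀ n : ℕ, MeasurableSet {ω | (n : ℕ∞) < T ω}) :
    ∫⁻ ω, (T ω : ℝ≥0∞) ∂μ = ∑' n : ℕ, μ {ω | (n : ℕ∞) < T ω} := by
  have hpt : ∀ ω, (T ω : ℝ≥0∞) = ∑' n : ℕ, {ω | (n : ℕ∞) < T ω}.indicator 1 ω := fun ω => by
    simp only [ENat.toENNReal_eq_tsum_ite (T ω), Set.indicator_apply, Set.mem_ofPred_eq,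
      Pi.one_apply]
  simp_rw [hpt]
  rw [lintegral_tsum fun n => (measurable_one.indicator (hT n)).aemeasurable]
  simp_rw [lintegral_indicator_one (hT _)]

section StoppedProcess

variable {Ω : Type*} {m : MeasurableSpace Ω} {μ : Measure Ω} {ℱ : Filtration ℕ m}
  {X : ℕ → Ω → ℝ} {τ : Ω → ℕ∞} {n : ℕ}

theorem integral_stoppedProcess_add_one_le [IsFiniteMeasure μ] {ε : ℝ} (hτ : IsStoppingTime ℱ τ)
    (hint : ∀ n, Integrable (X n) μ)
    (hdec : ∀ᵐ ω ∂μ, (n : ℕ∞) < τ ω → μ[X (n + 1)|ℱ n] ω ≤ X n ω - ε) :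
    ∫ ω, stoppedProcess X τ (n + 1) ω ∂μ ≤
      ∫ ω, stoppedProcess X τ n ω ∂μ - ε * μ.real {ω | (n : ℕ∞) < τ ω} := by
  set B := {ω | (n : ℕ∞) < τ ω}
  have hBℱ : MeasurableSet[ℱ n] B := hτ.measurableSet_gt n
  have hB : MeasurableSet B := ℱ.le n _ hBℱ
  have hdiff : ∫ ω, stoppedProcess X τ (n + 1) ω ∂μ - ∫ ω, stoppedProcess X τ n ω ∂μ =
      ∫ ω in B, μ[X (n + 1)|ℱ n] ω ∂μ - ∫ ω in B, X n ω ∂μ := by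
    calc _ = ∫ ω, (stoppedProcess X τ (n + 1) - stoppedProcess X τ n) ω ∂μ :=
          (integral_sub (integrable_stoppedProcess hτ hint _)
            (integrable_stoppedProcess hτ hint _)).symm
      _ = ∫ ω in B, (X (n + 1) ω - X n ω) ∂μ := by
          rw [stoppedProcess_add_one_sub, integral_indicator hB]; rfl
      _ = _ := by
          rw [integral_sub (hint _).integrableOn (hint _).integrableOn,
            setIntegral_condExp (ℱ.le n) (hint (n + 1)) hBℱ]
  have hdrift : ∫ ω in B, μ[X (n + 1)|ℱ n] ω ∂μ ≤ ∫ ω in B, (X n ω - ε) ∂μ :=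
    setIntegral_mono_ae_restrict integrable_condExp.integrableOn
      ((hint n).sub (integrable_const ε)).integrableOn
      ((ae_restrict_iff' hB).2 (hdec.mono fun ω h hω => h hω))
  rw [integral_sub (hint n).integrableOn (integrable_const ε).integrableOn, setIntegral_const,
    smul_eq_mul] at hdrift
  linarith

theorem le_integral_stoppedProcess [IsProbabilityMeasure μ] {K : ℝ} (hτ : IsStoppingTime ℱ τ)
    (hint : ∀ n, Integrable (X n) μ) (hK : K ≤ 0)
    (hnonneg : ∀ᵐ ω ∂μ, (n : ℕ∞) < τ ω → 0 ≤ X n ω)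
    (hterm : ∀ᵐ ω ∂μ, τ ω < ⊤ → K ≤ X (τ ω).toNat ω) :
    K ≤ ∫ ω, stoppedProcess X τ n ω ∂μ := by
  have hbound : ∀ᵐ ω ∂μ, K ≤ stoppedProcess X τ n ω := by
    filter_upwards [hnonneg, hterm] with ω hpos hstop
    rcases lt_or_ge (n : ℕ∞) (τ ω) with hlt | hge
    · rw [stoppedProcess_eq_of_le hlt.le]
      exact hK.trans (hpos hlt)
    · rw [stoppedProcess_eq_of_ge hge]
      lift τ ω to ℕ using (hge.trans_lt (ENat.natCast_lt_top n)).ne with t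
      simpa using hstop (ENat.natCast_lt_top t)
  simpa using integral_mono_ae (integrable_const K) (integrable_stoppedProcess hτ hint n) hbound

end StoppedProcess

end MeasureTheory

theorem stmt5_general {Ω : Type*} {m : MeasurableSpace Ω} (μ : Measure Ω) [IsProbabilityMeasure μ]
    (ℱ : Filtration ℕ m) (X : ℕ → Ω → ℝ)
    (hint : ∀ n, Integrable (X n) μ)
    (T : Ω → ℕ∞) (hT : ∀ n : ℕ, MeasurableSet[ℱ n] {ω | T ω ≤ (n : ℕ∞)})
    (x0 : ℝ) (hX0 : ∀ ω, X 0 ω = x0)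
    (ε K : ℝ) (hε : 0 < ε) (hK : K ≤ 0)
    (hnonneg : ∀ n : ℕ, ∀ᵐ ω ∂μ, (n : ℕ∞) < T ω → 0 ≤ X n ω)
    (hdec : ∀ n : ℕ, ∀ᵐ ω ∂μ, (n : ℕ∞) < T ω → (μ[X (n + 1)|ℱ n]) ω ≤ X n ω - ε)
    (hterm : ∀ᵐ ω ∂μ, T ω < ⊤ → K ≤ X (T ω).toNat ω ∧ X (T ω).toNat ω ≤ 0) :
    ∫⁻ ω, (T ω).toENNReal ∂μ ≤ ENNReal.ofReal ((x0 - K) / ε) := by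
  have hτ : IsStoppingTime ℱ T := hT
  have hstart : ∫ ω, stoppedProcess X T 0 ω ∂μ = x0 := by
    have : stoppedProcess X T 0 = fun _ => x0 := funext fun ω =>
      (stoppedProcess_eq_of_le (zero_le : (0 : ℕ∞) ≤ T ω)).trans (hX0 ω)
    simp [this]
  have hsum (N : ℕ) : ∑ n ∈ Finset.range N, μ.real {ω | (n : ℕ∞) < T ω} ≤ (x0 - K) / ε :=
    hstart ▸ sum_range_le_div_of_le_sub_mul hε
      (fun n => integral_stoppedProcess_add_one_le hτ hint (hdec n))
      (fun n => le_integral_stoppedProcess hτ hint hK (hnonneg n)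
        (hterm.mono fun _ h hT => (h hT).1)) N
  rw [lintegral_toENNReal_eq_tsum_measure_lt μ fun n => ℱ.le n _ (hτ.measurableSet_gt n)]
  refine ENNReal.tsum_le_of_sum_range_le fun N => ?_
  calc ∑ n ∈ Finset.range N, μ {ω | (n : ℕ∞) < T ω}
      = ENNReal.ofReal (∑ n ∈ Finset.range N, μ.real {ω | (n : ℕ∞) < T ω}) := by
        rw [ENNReal.ofReal_sum_of_nonneg fun _ _ => measureReal_nonneg]
        simp [ofReal_measureReal]
    _ ≤ ENNReal.ofReal ((x0 - K) / ε) := ENNReal.ofReal_le_ofReal (hsum N)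

/-- Ranking-supermartingale bound on the expected stopping time (Theorem 5.3 / C.1). -/
theorem stmt5 {Ω : Type*} {m : MeasurableSpace Ω} (μ : Measure Ω) [IsProbabilityMeasure μ]
    (ℱ : Filtration ℕ m) (X : ℕ → Ω → ℝ) (hadapted : Adapted ℱ X)
    (hint : ∀ n, Integrable (X n) μ)
    (T : Ω → ℕ∞) (hT : ∀ n : ℕ, MeasurableSet[ℱ n] {ω | T ω ≤ (n : ℕ∞)})
    (x0 : ℝ) (hX0 : ∀ ω, X 0 ω = x0)
    (ε K : ℝ) (hε : 0 < ε) (hK : K ≤ 0)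
    (hnonneg : ∀ n : ℕ, ∀ᵐ ω ∂μ, (n : ℕ∞) < T ω → 0 ≤ X n ω)
    (hdec : ∀ n : ℕ, ∀ᵐ ω ∂μ, (n : ℕ∞) < T ω → (μ[X (n + 1)|ℱ n]) ω ≤ X n ω - ε)
    (hterm : ∀ᵐ ω ∂μ, T ω < ⊤ → K ≤ X (T ω).toNat ω ∧ X (T ω).toNat ω ≤ 0) :
    ∫⁻ ω, (T ω).toENNReal ∂μ ≤ ENNReal.ofReal ((x0 - K) / ε) :=
  stmt5_general μ ℱ X hint T hT x0 hX0 ε K hε hK hnonneg hdec hterm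
end

section
/- Let $\epsilon > 0$, $c > 0$, and $h \ge 0$ be real numbers with $\epsilon \le c$. For $n > h/\epsilon$ define $p_n := \exp\left(-\frac{(\epsilon n - h)^2}{2 n c^2}\right)$. Then for every natural number $n \ge 2h/\epsilon$ with $n \ge 1$, we have $\frac{p_{n+1}}{p_n} \le \exp\left(-\frac{3\epsilon^2}{8 c^2}\right)$. -/
/-- Exponential decrease of the Azuma-type tail bound (from the proof of Theorem 6.2). -/
theorem stmt6 (ε c h : ℝ) (hε : 0 < ε) (hc : 0 < c) (hh : 0 ≤ h) (hεc : ε ≤ c)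
    (n : ℕ) (hn : 1 ≤ n) (hn2 : 2 * h / ε ≤ (n : ℝ)) :
    Real.exp (-(ε * ((n : ℝ) + 1) - h) ^ 2 / (2 * ((n : ℝ) + 1) * c ^ 2)) /
      Real.exp (-(ε * (n : ℝ) - h) ^ 2 / (2 * (n : ℝ) * c ^ 2)) ≤
    Real.exp (-(3 * ε ^ 2) / (8 * c ^ 2)) := by
  have hN : (1 : ℝ) ≤ (n : ℝ) := by exact_mod_cast hn
  have hN0 : (0 : ℝ) < (n : ℝ) := by linarith
  have hN1 : (0 : ℝ) < (n : ℝ) + 1 := by linarith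
  have hhn : 2 * h ≤ ε * (n : ℝ) := by
    rw [div_le_iff₀ hε] at hn2; linarith
  rw [← Real.exp_sub, Real.exp_le_exp, div_sub_div _ _ (by positivity) (by positivity),
    div_le_div_iff₀ (by positivity) (by positivity)]
  have key : (-(ε * ((n : ℝ) + 1) - h) ^ 2 * (2 * (n : ℝ)) -
      2 * ((n : ℝ) + 1) * -(ε * (n : ℝ) - h) ^ 2) * 8 ≤
      -(3 * ε ^ 2) * (2 * ((n : ℝ) + 1) * (2 * (n : ℝ))) := by
    nlinarith [mul_le_mul hhn hhn (by linarith) (by positivity),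
      mul_nonneg (sq_nonneg ε) hN0.le]
  have := mul_le_mul_of_nonneg_right key (by positivity : (0 : ℝ) ≤ c ^ 2 * c ^ 2)
  nlinarith [this]
end
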